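/- Let f : (0, ∞) → ℂ be continuously differentiable, and suppose there exist constants a, b ∈ ℂ, K ≥ 0 and C > 0 such that f(t) − a − b·log t → 0 as t → ∞ and |f′(t) − b/t| ≤ K·t^{−1−C} for all t ≥ 1. Then for every ρ ∈ (0, 1) the integral ∫_1^∞ f′(t) t^{−ρ} dt converges absolutely, and lim_{ρ → 0⁺} ( ∫_1^∞ f′(t) t^{−ρ} dt − b/ρ ) = a − f(1). Equivalently, the constant term at ρ = 0 of the meromorphic function ρ ↦ −∫_1^∞ f′(t) t^{−ρ} dt is f(1) − a. -/

import Mathlib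

/-!
Put `g t = f' t - b / t`. The bound on `g` makes it integrable on `(1, ∞)`, and since
`∫₁^∞ t^{-1-ρ} dt = 1/ρ`, the regularized integral `∫₁^∞ f' t t^{-ρ} dt - b/ρ` equals
`∫₁^∞ g t t^{-ρ} dt`. As `ρ → 0⁺` this tends to `∫₁^∞ g` by dominated convergence (`t^{-ρ} ≤ 1`),
and `g` is the derivative of `f t - b log t`, which tends to `a`, so `∫₁^∞ g = a - f 1`.
-/

open MeasureTheory Set Filter Topology

section RpowWeight

variable {E : Type*} [NormedAddCommGroup E] [NormedSpace ℝ E] {g : ℝ → E}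

lemma norm_rpow_neg_smul_le {t ρ : ℝ} (ht : 1 ≤ t) (hρ : 0 ≤ ρ) (x : E) :
    ‖t ^ (-ρ) • x‖ ≤ ‖x‖ := by
  rw [norm_smul, Real.norm_of_nonneg (by positivity)]
  exact mul_le_of_le_one_left (norm_nonneg _)
    (Real.rpow_le_one_of_one_le_of_nonpos ht (neg_nonpos.mpr hρ))

lemma integrableOn_Ioi_one_rpow_neg_smul (hg : IntegrableOn g (Ioi 1)) {ρ : ℝ} (hρ : 0 ≤ ρ) :
    IntegrableOn (fun t => t ^ (-ρ) • g t) (Ioi 1) :=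
  hg.norm.mono' ((measurable_id.pow_const _).aestronglyMeasurable.smul hg.1)
    (ae_restrict_of_forall_mem measurableSet_Ioi fun t (ht : 1 < t) =>
      norm_rpow_neg_smul_le ht.le hρ _)

lemma tendsto_setIntegral_Ioi_one_rpow_neg_smul (hg : IntegrableOn g (Ioi 1)) :
    Tendsto (fun ρ : ℝ => ∫ t in Ioi 1, t ^ (-ρ) • g t) (𝓝[≥] 0) (𝓝 (∫ t in Ioi 1, g t)) := by
  refine tendsto_integral_filter_of_dominated_convergence (fun t => ‖g t‖) ?_ ?_ hg.norm ?_
  · exact Eventually.of_forall fun ρ => (measurable_id.pow_const _).aestronglyMeasurable.smul hg.1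
  · filter_upwards [self_mem_nhdsWithin] with ρ (hρ : 0 ≤ ρ)
    exact ae_restrict_of_forall_mem measurableSet_Ioi fun t (ht : 1 < t) =>
      norm_rpow_neg_smul_le ht.le hρ _
  · filter_upwards [ae_restrict_mem measurableSet_Ioi] with t (ht : 1 < t)
    have hcont : ContinuousAt (fun ρ : ℝ => t ^ (-ρ) • g t) 0 :=
      ((Real.continuousAt_const_rpow (by positivity)).comp continuousAt_neg).smul continuousAt_const
    simpa using hcont.tendsto.mono_left nhdsWithin_le_nhds

end RpowWeight

lemma integral_Ioi_one_rpow_neg_one_sub {ρ : ℝ} (hρ : 0 < ρ) :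
    ∫ t in Ioi (1 : ℝ), t ^ (-1 - ρ) = ρ⁻¹ := by
  rw [integral_Ioi_rpow_of_lt (by linarith) one_pos, show -1 - ρ + 1 = -ρ by ring]
  simp

lemma aestronglyMeasurable_restrict_of_hasDerivAt {E : Type*} [NormedAddCommGroup E]
    [NormedSpace ℝ E] [CompleteSpace E] {f f' : ℝ → E} {s : Set ℝ} {μ : Measure ℝ}
    (hs : MeasurableSet s) (hderiv : ∀ t ∈ s, HasDerivAt f (f' t) t) :
    AEStronglyMeasurable f' (μ.restrict s) :=
  (aestronglyMeasurable_deriv f _).congr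
    (ae_restrict_of_forall_mem hs fun t ht => (hderiv t ht).deriv)

section Regularization

variable {h : ℝ → ℂ} {b : ℂ} {ρ : ℝ}

lemma mul_rpow_neg_eq_smul_sub_div_add {t : ℝ} (ht : 0 < t) (z : ℂ) :
    z * ((t ^ (-ρ) : ℝ) : ℂ) = t ^ (-ρ) • (z - b / t) + b * ((t ^ (-1 - ρ) : ℝ) : ℂ) := by
  rw [sub_eq_add_neg (-1), Real.rpow_add ht, Real.rpow_neg_one, Complex.real_smul]
  push_cast
  field_simp
  ring

lemma integrableOn_Ioi_one_mul_rpow_neg_one_sub (hρ : 0 < ρ) :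
    IntegrableOn (fun t : ℝ => b * ((t ^ (-1 - ρ) : ℝ) : ℂ)) (Ioi 1) :=
  (integrableOn_Ioi_rpow_of_lt (by linarith) one_pos).ofReal.const_mul b

lemma integrableOn_Ioi_one_mul_rpow_neg (hint : IntegrableOn (fun t => h t - b / t) (Ioi 1))
    (hρ : 0 < ρ) : IntegrableOn (fun t : ℝ => h t * ((t ^ (-ρ) : ℝ) : ℂ)) (Ioi 1) :=
  ((integrableOn_Ioi_one_rpow_neg_smul hint hρ.le).add
    (integrableOn_Ioi_one_mul_rpow_neg_one_sub hρ)).congr_fun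
    (fun t (ht : 1 < t) => (mul_rpow_neg_eq_smul_sub_div_add (by linarith) _).symm)
    measurableSet_Ioi

lemma setIntegral_Ioi_one_mul_rpow_neg_sub_div (hint : IntegrableOn (fun t => h t - b / t) (Ioi 1))
    (hρ : 0 < ρ) :
    (∫ t in Ioi (1 : ℝ), h t * ((t ^ (-ρ) : ℝ) : ℂ)) - b / ρ =
      ∫ t in Ioi (1 : ℝ), t ^ (-ρ) • (h t - b / t) := by
  rw [setIntegral_congr_fun measurableSet_Ioi
      fun t (ht : 1 < t) => mul_rpow_neg_eq_smul_sub_div_add (by linarith) _,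
    integral_add (integrableOn_Ioi_one_rpow_neg_smul hint hρ.le)
      (integrableOn_Ioi_one_mul_rpow_neg_one_sub hρ),
    integral_const_mul, integral_complex_ofReal, integral_Ioi_one_rpow_neg_one_sub hρ]
  push_cast
  ring

end Regularization

lemma setIntegral_Ioi_one_sub_div_eq {f f' : ℝ → ℂ} {a b : ℂ}
    (hderiv : ∀ t : ℝ, 0 < t → HasDerivAt f (f' t) t)
    (hlim : Tendsto (fun t : ℝ => f t - a - b * (Real.log t : ℂ)) atTop (𝓝 0))
    (hint : IntegrableOn (fun t => f' t - b / t) (Ioi 1)) :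
    ∫ t in Ioi (1 : ℝ), (f' t - b / t) = a - f 1 := by
  have hF : ∀ t ∈ Ici (1 : ℝ),
      HasDerivAt (fun t => f t - b * (Real.log t : ℂ)) (f' t - b / t) t := by
    intro t ht
    have ht0 : 0 < t := zero_lt_one.trans_le ht
    have hlog := ((Real.hasDerivAt_log ht0.ne').ofReal_comp).const_mul b
    refine ((hderiv t ht0).sub hlog).congr_deriv ?_
    push_cast
    rw [div_eq_mul_inv]
  have hFlim : Tendsto (fun t => f t - b * (Real.log t : ℂ)) atTop (𝓝 a) := by
    simpa using (hlim.add_const a).congr fun t => by ring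
  simpa using integral_Ioi_of_hasDerivAt_of_tendsto' hF hint hFlim

theorem regularized_integral_constant_term_general (f f' : ℝ → ℂ) (a b : ℂ) (K C : ℝ)
    (hC : 0 < C)
    (hderiv : ∀ t : ℝ, 0 < t → HasDerivAt f (f' t) t)
    (hlim : Tendsto (fun t : ℝ => f t - a - b * (Real.log t : ℂ)) atTop (𝓝 0))
    (hbound : ∀ t : ℝ, 1 ≤ t → ‖f' t - b / (t : ℂ)‖ ≤ K * t ^ (-1 - C)) :
    (∀ ρ : ℝ, 0 < ρ → ρ < 1 →
        IntegrableOn (fun t : ℝ => f' t * ((t ^ (-ρ) : ℝ) : ℂ)) (Ioi 1) volume) ∧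
      Tendsto (fun ρ : ℝ => (∫ t in Ioi (1 : ℝ), f' t * ((t ^ (-ρ) : ℝ) : ℂ)) - b / (ρ : ℂ))
        (𝓝[>] 0) (𝓝 (a - f 1)) := by
  have hmeas : AEStronglyMeasurable (fun t => f' t - b / t) (volume.restrict (Ioi 1)) :=
    (aestronglyMeasurable_restrict_of_hasDerivAt measurableSet_Ioi
      fun t (ht : 1 < t) => hderiv t (by linarith)).sub
      (measurable_const.div Complex.measurable_ofReal).aestronglyMeasurable
  have hint : IntegrableOn (fun t => f' t - b / t) (Ioi 1) :=
    ((integrableOn_Ioi_rpow_of_lt (by linarith) one_pos).const_mul K).mono' hmeas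
      (ae_restrict_of_forall_mem measurableSet_Ioi fun t (ht : 1 < t) => hbound t ht.le)
  refine ⟨fun ρ hρ _ => integrableOn_Ioi_one_mul_rpow_neg hint hρ, ?_⟩
  rw [← setIntegral_Ioi_one_sub_div_eq hderiv hlim hint]
  refine ((tendsto_setIntegral_Ioi_one_rpow_neg_smul hint).mono_left
    (nhdsWithin_mono _ Ioi_subset_Ici_self)).congr' ?_
  filter_upwards [self_mem_nhdsWithin] with ρ (hρ : 0 < ρ)
  exact (setIntegral_Ioi_one_mul_rpow_neg_sub_div hint hρ).symm

/-- Regularization lemma: if `f : (0,∞) → ℂ` is C¹, `f(t) − a − b log t → 0` as `t → ∞`, and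
`|f′(t) − b/t| ≤ K t^{−1−C}` for `t ≥ 1`, then for every `ρ ∈ (0,1)` the integral
`∫_1^∞ f′(t) t^{−ρ} dt` converges absolutely, and
`∫_1^∞ f′(t) t^{−ρ} dt − b/ρ → a − f(1)` as `ρ → 0⁺`. -/
theorem regularized_integral_constant_term (f f' : ℝ → ℂ) (a b : ℂ) (K C : ℝ)
    (hK : 0 ≤ K) (hC : 0 < C)
    (hderiv : ∀ t : ℝ, 0 < t → HasDerivAt f (f' t) t)
    (hcont : ContinuousOn f' (Ioi 0))
    (hlim : Tendsto (fun t : ℝ => f t - a - b * (Real.log t : ℂ)) atTop (𝓝 0))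
    (hbound : ∀ t : ℝ, 1 ≤ t → ‖f' t - b / (t : ℂ)‖ ≤ K * t ^ (-1 - C)) :
    (∀ ρ : ℝ, 0 < ρ → ρ < 1 →
        IntegrableOn (fun t : ℝ => f' t * ((t ^ (-ρ) : ℝ) : ℂ)) (Ioi 1) volume) ∧
      Tendsto (fun ρ : ℝ => (∫ t in Ioi (1 : ℝ), f' t * ((t ^ (-ρ) : ℝ) : ℂ)) - b / (ρ : ℂ))
        (𝓝[>] 0) (𝓝 (a - f 1)) :=
  regularized_integral_constant_term_general f f' a b K C hC hderiv hlim hbound
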